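/- Let ζ = exp(2π√−1/8) and φ = (1 + √5)/2, and let G ⊂ GL(4, ℂ) be the group of type (U) generated by the three 4 × 4 matrices A = blockdiag(g₁, g₁⁻¹) where g₁ = (1/2)·((φ + √−1·φ⁻¹, 1), (−1, φ − √−1·φ⁻¹)), B = blockdiag((1/√2)·((ζ⁵, ζ⁵), (ζ⁷, ζ³)), (1/√2)·((ζ³, ζ⁷), (ζ⁵, ζ⁵))), and σ = ((0, I₂), (I₂, 0)). Then each of A, B, σ lies in Sp(ℂ⁴, ω), where ω(u, v) = u₁v₂ − u₂v₁ + u₃v₄ − u₄v₃, and the 2-dimensional subspace L = {v ∈ ℂ⁴ : v₁ = v₄ and v₂ = v₃} is a Lagrangian subspace of (ℂ⁴, ω) that is mapped onto itself by each of A, B, σ, hence by all of G. In particular G is an improper symplectic reflection group. -/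
import Mathlib


/-- The standard symplectic form `ω(u, v) = u₁v₂ - u₂v₁ + u₃v₄ - u₄v₃` on `ℂ⁴`. -/
def omega4 (u v : Fin 4 → ℂ) : ℂ := u 0 * v 1 - u 1 * v 0 + u 2 * v 3 - u 3 * v 2

/-- The subspace `L = {v ∈ ℂ⁴ : v₁ = v₄ and v₂ = v₃}`. -/
noncomputable def Lsub : Submodule ℂ (Fin 4 → ℂ) where
  carrier := {v | v 0 = v 3 ∧ v 1 = v 2}
  add_mem' := fun ha hb =>
    ⟨by simp only [Pi.add_apply, ha.1, hb.1], by simp only [Pi.add_apply, ha.2, hb.2]⟩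
  zero_mem' := ⟨rfl, rfl⟩
  smul_mem' := fun c v hv =>
    ⟨by simp only [Pi.smul_apply, hv.1], by simp only [Pi.smul_apply, hv.2]⟩

/-- The matrix `g₁ = (1/2)((φ + √-1 φ⁻¹, 1), (-1, φ - √-1 φ⁻¹))` with `φ = (1+√5)/2`. -/
noncomputable def gOne : Matrix (Fin 2) (Fin 2) ℂ :=
  !![(2 : ℂ)⁻¹ * (((1 + Real.sqrt 5) / 2 : ℂ) + Complex.I * ((1 + Real.sqrt 5) / 2 : ℂ)⁻¹),
     (2 : ℂ)⁻¹ * 1;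
     (2 : ℂ)⁻¹ * (-1),
     (2 : ℂ)⁻¹ * (((1 + Real.sqrt 5) / 2 : ℂ) - Complex.I * ((1 + Real.sqrt 5) / 2 : ℂ)⁻¹)]

/- ### Auxiliary lemmas -/

lemma mem_Lsub' {v : Fin 4 → ℂ} : v ∈ Lsub ↔ v 0 = v 3 ∧ v 1 = v 2 := Iff.rfl

noncomputable def Lequiv' : Lsub ≃ₗ[ℂ] (Fin 2 → ℂ) where
  toFun v := ![v.1 0, v.1 1]
  map_add' a b := by funext i; fin_cases i <;> simp
  map_smul' c a := by funext i; fin_cases i <;> simp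
  invFun w := ⟨![w 0, w 1, w 1, w 0], by constructor <;> simp⟩
  left_inv v := Subtype.ext (funext fun i => by
    fin_cases i <;> simp [v.2.1, v.2.2])
  right_inv w := funext fun i => by fin_cases i <;> simp

lemma finrank_Lsub' : Module.finrank ℂ Lsub = 2 := by
  rw [Lequiv'.finrank_eq]; simp

lemma inj_of_symp' (M : Matrix (Fin 4) (Fin 4) ℂ)
    (h : ∀ u v, omega4 (M.mulVec u) (M.mulVec v) = omega4 u v) :
    Function.Injective M.mulVecLin := by
  rw [← LinearMap.ker_eq_bot, LinearMap.ker_eq_bot']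
  intro u hu
  have hu' : M.mulVec u = 0 := hu
  have key : ∀ v, omega4 u v = 0 := by
    intro v
    have := h u v
    rw [hu'] at this
    simpa [omega4] using this.symm
  funext i
  fin_cases i
  · simpa [omega4] using key ![0,1,0,0]
  · simpa [omega4] using key ![-1,0,0,0]
  · simpa [omega4] using key ![0,0,0,1]
  · simpa [omega4] using key ![0,0,-1,0]

lemma map_L_eq' (M : Matrix (Fin 4) (Fin 4) ℂ)
    (hsymp : ∀ u v, omega4 (M.mulVec u) (M.mulVec v) = omega4 u v)
    (hsub : ∀ v ∈ Lsub, M.mulVec v ∈ Lsub) :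
    M.mulVec '' Lsub = Lsub := by
  have hinj := inj_of_symp' M hsymp
  have h1 : Submodule.map M.mulVecLin Lsub ≤ Lsub := by
    rintro x ⟨v, hv, rfl⟩
    exact hsub v hv
  have h2 : Module.finrank ℂ (Submodule.map M.mulVecLin Lsub) = Module.finrank ℂ Lsub :=
    ((Submodule.equivMapOfInjective M.mulVecLin hinj Lsub).finrank_eq).symm
  have h3 := Submodule.eq_of_le_of_finrank_le h1 (le_of_eq h2.symm)
  calc M.mulVec '' Lsub = ↑(Submodule.map M.mulVecLin Lsub) := by
        rw [Submodule.map_coe]; rfl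
    _ = ↑Lsub := by rw [h3]

lemma h5' : ((Real.sqrt 5 : ℝ) : ℂ) * ((Real.sqrt 5 : ℝ) : ℂ) = 5 := by
  rw [← Complex.ofReal_mul, Real.mul_self_sqrt (by norm_num)]; norm_num

lemma hphi_inv' : (((1 + Real.sqrt 5) / 2 : ℂ))⁻¹ = (((Real.sqrt 5 : ℝ) : ℂ) - 1) / 2 := by
  apply inv_eq_of_mul_eq_one_right
  linear_combination h5' / 4

lemma g00' : gOne 0 0 = (2 : ℂ)⁻¹ * (((1 + Real.sqrt 5) / 2 : ℂ) + Complex.I * ((1 + Real.sqrt 5) / 2 : ℂ)⁻¹) := by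
  simp [gOne]
lemma g01' : gOne 0 1 = (2 : ℂ)⁻¹ := by simp [gOne]
lemma g10' : gOne 1 0 = -(2 : ℂ)⁻¹ := by simp [gOne]
lemma g11' : gOne 1 1 = (2 : ℂ)⁻¹ * (((1 + Real.sqrt 5) / 2 : ℂ) - Complex.I * ((1 + Real.sqrt 5) / 2 : ℂ)⁻¹) := by
  simp [gOne]

lemma gdet' : gOne 0 0 * gOne 1 1 - gOne 0 1 * gOne 1 0 = 1 := by
  rw [g00', g01', g10', g11', hphi_inv']
  linear_combination h5' / 8 - (((Real.sqrt 5:ℝ):ℂ) - 1)^2 / 16 * Complex.I_mul_I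

lemma gdetfull' : gOne.det = 1 := by rw [Matrix.det_fin_two]; exact gdet'

lemma gInv' : gOne⁻¹ = !![gOne 1 1, -gOne 0 1; -gOne 1 0, gOne 0 0] := by
  rw [Matrix.inv_def, Matrix.adjugate_fin_two, gdetfull']
  simp

lemma gi00' : gOne⁻¹ 0 0 = gOne 1 1 := by rw [gInv']; simp
lemma gi01' : gOne⁻¹ 0 1 = -gOne 0 1 := by rw [gInv']; simp
lemma gi10' : gOne⁻¹ 1 0 = -gOne 1 0 := by rw [gInv']; simp
lemma gi11' : gOne⁻¹ 1 1 = gOne 0 0 := by rw [gInv']; simp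

lemma gidet' : gOne⁻¹ 0 0 * gOne⁻¹ 1 1 - gOne⁻¹ 0 1 * gOne⁻¹ 1 0 = 1 := by
  rw [gi00', gi01', gi10', gi11']; linear_combination gdet'

lemma hg_anti : gOne 0 1 = -gOne 1 0 := by rw [g01', g10']; ring

/-- Symplecticity for block-diagonal matrices with unit-determinant blocks. -/
lemma symp_blockdiag (a b c d e f g h : ℂ) (hd1 : a * d - b * c = 1) (hd2 : e * h - f * g = 1)
    (u v : Fin 4 → ℂ) :
    omega4 ((!![a,b,0,0; c,d,0,0; 0,0,e,f; 0,0,g,h]).mulVec u)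
      ((!![a,b,0,0; c,d,0,0; 0,0,e,f; 0,0,g,h]).mulVec v) = omega4 u v := by
  simp [omega4, Matrix.mulVec, dotProduct, Fin.sum_univ_four]
  linear_combination (u 0 * v 1 - u 1 * v 0) * hd1 + (u 2 * v 3 - u 3 * v 2) * hd2


/-- For the group of type (U), generated by `A = blockdiag(g₁, g₁⁻¹)`,
`B = blockdiag((1/√2)((ζ⁵,ζ⁵),(ζ⁷,ζ³)), (1/√2)((ζ³,ζ⁷),(ζ⁵,ζ⁵)))` and
`σ = ((0,I₂),(I₂,0))` with `ζ = exp(2π√-1/8)` and `φ = (1+√5)/2`: each of `A`, `B`, `σ`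
is symplectic for `ω`, and `L = {v : v₁ = v₄, v₂ = v₃}` is a Lagrangian subspace mapped
onto itself by each of `A`, `B`, `σ`, hence by the whole group they generate: the group
of type (U) is an improper symplectic reflection group. -/
theorem stmt_17 (ζ : ℂ) (hζ : ζ = Complex.exp (2 * Real.pi * Complex.I / 8))
    (A B S : Matrix (Fin 4) (Fin 4) ℂ)
    (hA : A = !![gOne 0 0, gOne 0 1, 0, 0;
                 gOne 1 0, gOne 1 1, 0, 0;
                 0, 0, gOne⁻¹ 0 0, gOne⁻¹ 0 1;
                 0, 0, gOne⁻¹ 1 0, gOne⁻¹ 1 1])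
    (hB : B = !![(Real.sqrt 2 : ℂ)⁻¹ * ζ ^ 5, (Real.sqrt 2 : ℂ)⁻¹ * ζ ^ 5, 0, 0;
                 (Real.sqrt 2 : ℂ)⁻¹ * ζ ^ 7, (Real.sqrt 2 : ℂ)⁻¹ * ζ ^ 3, 0, 0;
                 0, 0, (Real.sqrt 2 : ℂ)⁻¹ * ζ ^ 3, (Real.sqrt 2 : ℂ)⁻¹ * ζ ^ 7;
                 0, 0, (Real.sqrt 2 : ℂ)⁻¹ * ζ ^ 5, (Real.sqrt 2 : ℂ)⁻¹ * ζ ^ 5])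
    (hS : S = !![0, 0, 1, 0; 0, 0, 0, 1; 1, 0, 0, 0; 0, 1, 0, 0]) :
    (∀ u v, omega4 (A.mulVec u) (A.mulVec v) = omega4 u v) ∧
    (∀ u v, omega4 (B.mulVec u) (B.mulVec v) = omega4 u v) ∧
    (∀ u v, omega4 (S.mulVec u) (S.mulVec v) = omega4 u v) ∧
    Module.finrank ℂ Lsub = 2 ∧
    (∀ u ∈ Lsub, ∀ v ∈ Lsub, omega4 u v = 0) ∧
    A.mulVec '' Lsub = Lsub ∧ B.mulVec '' Lsub = Lsub ∧ S.mulVec '' Lsub = Lsub ∧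
    (∀ g ∈ Submonoid.closure ({A, B, S} : Set (Matrix (Fin 4) (Fin 4) ℂ)),
      g.mulVec '' Lsub = Lsub) := by
  -- ζ facts
  have h8 : ζ ^ 8 = 1 := by
    rw [hζ, ← Complex.exp_nat_mul]
    rw [show (8:ℕ) * (2 * Real.pi * Complex.I / 8) = 2 * Real.pi * Complex.I by
      push_cast; ring]
    exact Complex.exp_two_pi_mul_I
  have h4 : ζ ^ 4 = -1 := by
    rw [hζ, ← Complex.exp_nat_mul]
    rw [show (4:ℕ) * (2 * Real.pi * Complex.I / 8) = Real.pi * Complex.I by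
      push_cast; ring]
    exact Complex.exp_pi_mul_I
  have hw : ((Real.sqrt 2:ℝ):ℂ) * ((Real.sqrt 2:ℝ):ℂ) = 2 := by
    rw [← Complex.ofReal_mul, Real.mul_self_sqrt (by norm_num)]; norm_num
  have hr : ((Real.sqrt 2:ℝ):ℂ)⁻¹ * ((Real.sqrt 2:ℝ):ℂ)⁻¹ * 2 = 1 := by
    rw [← hw]; field_simp
  set r : ℂ := ((Real.sqrt 2:ℝ):ℂ)⁻¹ with hrdef
  have hdetB1 : (r * ζ^5) * (r * ζ^3) - (r * ζ^5) * (r * ζ^7) = 1 := by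
    linear_combination (r*r)*(1-ζ^4)*h8 - (r*r)*h4 + hr
  have hdetB2 : (r * ζ^3) * (r * ζ^5) - (r * ζ^7) * (r * ζ^5) = 1 := by
    linear_combination hdetB1
  -- symplecticity
  have hsA : ∀ u v, omega4 (A.mulVec u) (A.mulVec v) = omega4 u v := by
    intro u v
    rw [hA]
    exact symp_blockdiag _ _ _ _ _ _ _ _ gdet' gidet' u v
  have hsB : ∀ u v, omega4 (B.mulVec u) (B.mulVec v) = omega4 u v := by
    intro u v
    rw [hB]
    exact symp_blockdiag _ _ _ _ _ _ _ _ hdetB1 hdetB2 u v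
  have hsS : ∀ u v, omega4 (S.mulVec u) (S.mulVec v) = omega4 u v := by
    intro u v
    rw [hS]
    simp [omega4, Matrix.mulVec, dotProduct, Fin.sum_univ_four]
    ring
  -- invariance (⊆)
  have hsubA : ∀ v ∈ Lsub, A.mulVec v ∈ Lsub := by
    intro v hv
    obtain ⟨h03, h12⟩ := mem_Lsub'.mp hv
    rw [hA]
    refine mem_Lsub'.mpr ⟨?_, ?_⟩ <;>
      simp [Matrix.mulVec, dotProduct, Fin.sum_univ_four, gi00', gi01', gi10', gi11']
    · linear_combination gOne 0 0 * h03 + gOne 0 1 * h12 + v 2 * hg_anti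
    · linear_combination gOne 1 0 * h03 + gOne 1 1 * h12 + v 3 * hg_anti
  have hsubB : ∀ v ∈ Lsub, B.mulVec v ∈ Lsub := by
    intro v hv
    obtain ⟨h03, h12⟩ := mem_Lsub'.mp hv
    rw [hB]
    refine mem_Lsub'.mpr ⟨?_, ?_⟩ <;>
      simp [Matrix.mulVec, dotProduct, Fin.sum_univ_four]
    · linear_combination (r * ζ^5) * h03 + (r * ζ^5) * h12
    · linear_combination (r * ζ^7) * h03 + (r * ζ^3) * h12
  have hsubS : ∀ v ∈ Lsub, S.mulVec v ∈ Lsub := by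
    intro v hv
    obtain ⟨h03, h12⟩ := mem_Lsub'.mp hv
    rw [hS]
    refine mem_Lsub'.mpr ⟨?_, ?_⟩ <;>
      simp [Matrix.mulVec, dotProduct, Fin.sum_univ_four]
    · exact h12.symm
    · exact h03.symm
  have hmapA := map_L_eq' A hsA hsubA
  have hmapB := map_L_eq' B hsB hsubB
  have hmapS := map_L_eq' S hsS hsubS
  refine ⟨hsA, hsB, hsS, finrank_Lsub', ?_, hmapA, hmapB, hmapS, ?_⟩
  · intro u hu v hv
    obtain ⟨hu1, hu2⟩ := mem_Lsub'.mp hu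
    obtain ⟨hv1, hv2⟩ := mem_Lsub'.mp hv
    simp only [omega4]
    rw [hu1, hu2, hv1, hv2]; ring
  · intro g hg
    induction hg using Submonoid.closure_induction with
    | mem x hx =>
      rcases hx with rfl | rfl | rfl
      · exact hmapA
      · exact hmapB
      · exact hmapS
    | one => simp [Matrix.one_mulVec, Set.image_id']
    | mul x y hx hy ihx ihy =>
      have hcomp : (x * y).mulVec = x.mulVec ∘ y.mulVec := by
        funext w; exact (Matrix.mulVec_mulVec w x y).symm
      rw [hcomp, Set.image_comp, ihy, ihx]
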